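/- arXiv:1404.1866 — 5 statements merged into one kernel-verified Lean document; each statement's English description precedes it below -/
import Mathlib

section
/- For all (ω₁,ω₂) ∈ 𝕋², writing x = χ₁(ω₁,ω₂) and y = χ₂(ω₁,ω₂), both z = ω₁ + ω₁⁻¹ and z = ω₂ + ω₂⁻¹ are roots of the cubic polynomial z³ + (1−x)z² + (y−2)z + 2y − x² + 2x − 1. -/
/-- Character of the 7-dimensional fundamental representation of G₂ on the torus. -/
noncomputable def χ₁ (ω₁ ω₂ : ℂ) : ℂ :=
  1 + ω₁ + ω₁⁻¹ + ω₂ + ω₂⁻¹ + ω₁ * ω₂⁻¹ + ω₁⁻¹ * ω₂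

/-- Character of the 14-dimensional fundamental representation of G₂ on the torus. -/
noncomputable def χ₂ (ω₁ ω₂ : ℂ) : ℂ :=
  χ₁ ω₁ ω₂ + 1 + ω₁ * ω₂ + ω₁⁻¹ * ω₂⁻¹ + ω₁ ^ 2 * ω₂⁻¹ + (ω₁⁻¹) ^ 2 * ω₂
    + ω₁ * (ω₂⁻¹) ^ 2 + ω₁⁻¹ * ω₂ ^ 2

/-! The nonzero weights of the 7-dimensional representation come in three opposite pairs, giving
`p = ω₁ + ω₁⁻¹`, `q = ω₂ + ω₂⁻¹` and `r = ω₁ ω₂⁻¹ + ω₁⁻¹ ω₂`. One has `χ₁ = 1 + p + q + r`,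
`χ₂ = 2 + (pq + pr + qr)` and `pqr = p² + q² + r² - 4`, so by Vieta the cubic is `(z - p)(z - q)(z - r)`. -/

theorem add_inv_mul_add_inv_mul_add_inv_eq {K : Type*} [Field K] {a b : K} (ha : a ≠ 0)
    (hb : b ≠ 0) :
    (a + a⁻¹) * (b + b⁻¹) * (a * b⁻¹ + a⁻¹ * b)
      = (a + a⁻¹) ^ 2 + (b + b⁻¹) ^ 2 + (a * b⁻¹ + a⁻¹ * b) ^ 2 - 4 := by
  field_simp
  ring

theorem χ₁_eq (ω₁ ω₂ : ℂ) :
    χ₁ ω₁ ω₂ = 1 + ((ω₁ + ω₁⁻¹) + (ω₂ + ω₂⁻¹) + (ω₁ * ω₂⁻¹ + ω₁⁻¹ * ω₂)) := by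
  unfold χ₁
  ring

theorem χ₂_eq {ω₁ ω₂ : ℂ} (h₁ : ω₁ ≠ 0) (h₂ : ω₂ ≠ 0) :
    χ₂ ω₁ ω₂ = 2 + ((ω₁ + ω₁⁻¹) * (ω₂ + ω₂⁻¹) + (ω₁ + ω₁⁻¹) * (ω₁ * ω₂⁻¹ + ω₁⁻¹ * ω₂)
      + (ω₂ + ω₂⁻¹) * (ω₁ * ω₂⁻¹ + ω₁⁻¹ * ω₂)) := by
  unfold χ₂ χ₁
  field_simp
  ring

theorem cubic_eq_mul_sub {ω₁ ω₂ : ℂ} (h₁ : ω₁ ≠ 0) (h₂ : ω₂ ≠ 0) (z : ℂ) :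
    z ^ 3 + (1 - χ₁ ω₁ ω₂) * z ^ 2 + (χ₂ ω₁ ω₂ - 2) * z
        + 2 * χ₂ ω₁ ω₂ - (χ₁ ω₁ ω₂) ^ 2 + 2 * χ₁ ω₁ ω₂ - 1
      = (z - (ω₁ + ω₁⁻¹)) * (z - (ω₂ + ω₂⁻¹)) * (z - (ω₁ * ω₂⁻¹ + ω₁⁻¹ * ω₂)) := by
  rw [χ₁_eq, χ₂_eq h₁ h₂]
  linear_combination add_inv_mul_add_inv_mul_add_inv_eq h₁ h₂

theorem cubic_roots_of_torus_coords :
    ∀ ω₁ ω₂ : ℂ, ‖ω₁‖ = 1 → ‖ω₂‖ = 1 →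
      ∀ z : ℂ, (z = ω₁ + ω₁⁻¹ ∨ z = ω₂ + ω₂⁻¹) →
        z ^ 3 + (1 - χ₁ ω₁ ω₂) * z ^ 2 + (χ₂ ω₁ ω₂ - 2) * z
          + 2 * χ₂ ω₁ ω₂ - (χ₁ ω₁ ω₂) ^ 2 + 2 * χ₁ ω₁ ω₂ - 1 = 0 := by
  intro ω₁ ω₂ h₁ h₂ z hz
  have ne₁ : ω₁ ≠ 0 := norm_ne_zero_iff.mp (by simp [h₁])
  have ne₂ : ω₂ ≠ 0 := norm_ne_zero_iff.mp (by simp [h₂])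
  rw [cubic_eq_mul_sub ne₁ ne₂]
  rcases hz with rfl | rfl <;> simp
end

section
/- With ζ = e^{2πi/13}: χ₁(ζ, ζ⁴) = (1 + √13)/2 and χ₂(ζ, ζ⁴) = 1, and χ₁(ζ², ζ⁷) = (1 − √13)/2 and χ₂(ζ², ζ⁷) = 1, where χ₁, χ₂ are the fundamental G₂ characters on the torus. -/
def quadraticPeriodThirteen {R : Type*} [Monoid R] [Add R] (z : R) : R :=
  z + z ^ 3 + z ^ 4 + z ^ 9 + z ^ 10 + z ^ 12

section PrimitiveRoot

variable {R : Type*} [CommRing R] [IsDomain R] {z : R}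

theorem IsPrimitiveRoot.sum_pow_thirteen (hz : IsPrimitiveRoot z 13) :
    1 + z + z ^ 2 + z ^ 3 + z ^ 4 + z ^ 5 + z ^ 6 + z ^ 7 + z ^ 8 + z ^ 9 + z ^ 10 + z ^ 11
      + z ^ 12 = 0 := by
  simpa [Finset.sum_range_succ] using
    hz.geom_sum_eq_zero (by norm_num)

theorem quadraticPeriodThirteen_sq_add_self (hz : IsPrimitiveRoot z 13) :
    quadraticPeriodThirteen z ^ 2 + quadraticPeriodThirteen z = 3 := by
  unfold quadraticPeriodThirteen
  linear_combination 3 * hz.sum_pow_thirteen + (z ^ 11 + 2 * z ^ 9 + 2 * z ^ 8 + z ^ 7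
    + 2 * z ^ 6 + z ^ 5 + 2 * z ^ 3 + 2 * z ^ 2 + 2 * z + 6) * hz.pow_eq_one

end PrimitiveRoot

theorem inv_pow_eq_pow_of_pow_eq_one {M : Type*} [DivisionMonoid M] {z : M} {k m n : ℕ}
    (h : z ^ n = 1) (hkm : k + m = n) : (z ^ k)⁻¹ = z ^ m :=
  inv_eq_of_mul_eq_one_right (by rw [← pow_add, hkm, h])

theorem inv_eq_pow_of_pow_eq_one {M : Type*} [DivisionMonoid M] {z : M} {m n : ℕ}
    (h : z ^ n = 1) (hm : 1 + m = n) : z⁻¹ = z ^ m := by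
  simpa using inv_pow_eq_pow_of_pow_eq_one h hm

section Characters

variable {z : ℂ}

theorem χ₁_pow_four (h : z ^ 13 = 1) : χ₁ z (z ^ 4) = 1 + quadraticPeriodThirteen z := by
  rw [χ₁, quadraticPeriodThirteen, inv_eq_pow_of_pow_eq_one h (m := 12) rfl,
    inv_pow_eq_pow_of_pow_eq_one h (m := 9) rfl]
  linear_combination z ^ 3 * h

theorem χ₂_pow_four (hz : IsPrimitiveRoot z 13) : χ₂ z (z ^ 4) = 1 := by
  rw [χ₂, χ₁, inv_eq_pow_of_pow_eq_one hz.pow_eq_one (m := 12) rfl,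
    inv_pow_eq_pow_of_pow_eq_one hz.pow_eq_one (m := 9) rfl]
  linear_combination hz.sum_pow_thirteen
    + (z ^ 15 + z ^ 8 + z ^ 7 + z ^ 6 + z ^ 3 + z ^ 2) * hz.pow_eq_one

theorem χ₁_pow_two_pow_seven (hz : IsPrimitiveRoot z 13) :
    χ₁ (z ^ 2) (z ^ 7) = -quadraticPeriodThirteen z := by
  rw [χ₁, quadraticPeriodThirteen, inv_pow_eq_pow_of_pow_eq_one hz.pow_eq_one (m := 11) rfl,
    inv_pow_eq_pow_of_pow_eq_one hz.pow_eq_one (m := 6) rfl]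
  linear_combination hz.sum_pow_thirteen + z ^ 5 * hz.pow_eq_one

theorem χ₂_pow_two_pow_seven (hz : IsPrimitiveRoot z 13) : χ₂ (z ^ 2) (z ^ 7) = 1 := by
  rw [χ₂, χ₁, inv_pow_eq_pow_of_pow_eq_one hz.pow_eq_one (m := 11) rfl,
    inv_pow_eq_pow_of_pow_eq_one hz.pow_eq_one (m := 6) rfl]
  linear_combination hz.sum_pow_thirteen
    + (z ^ 16 + z ^ 12 + z ^ 5 + z ^ 4 + z ^ 3 + z) * hz.pow_eq_one

end Characters

theorem eq_of_sq_add_self_eq_three {r : ℝ} (h : r ^ 2 + r = 3) (hr : -2 < r) :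
    r = (Real.sqrt 13 - 1) / 2 := by
  have hsq : (2 * r + 1) ^ 2 = 13 := by linear_combination 4 * h
  have hpos : 0 ≤ 2 * r + 1 := by nlinarith
  rw [← hsq, Real.sqrt_sq hpos]
  ring

section Analytic

open Complex

theorem isPrimitiveRoot_exp_two_pi_I_div_thirteen :
    IsPrimitiveRoot (exp (2 * Real.pi * I / 13)) 13 := by
  exact_mod_cast isPrimitiveRoot_exp 13 (by norm_num)

theorem exp_mul_I_pow_add_inv (θ : ℝ) (k : ℕ) :
    exp (θ * I) ^ k + (exp (θ * I) ^ k)⁻¹ = 2 * Real.cos (k * θ) := by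
  rw [← exp_nat_mul, ← exp_neg, ofReal_cos, two_cos]
  push_cast
  ring_nf

theorem quadraticPeriodThirteen_exp_two_pi_I_div_thirteen :
    quadraticPeriodThirteen (exp (2 * Real.pi * I / 13)) =
      ((2 * (Real.cos (1 * (2 * Real.pi / 13)) + Real.cos (3 * (2 * Real.pi / 13))
        + Real.cos (4 * (2 * Real.pi / 13))) : ℝ) : ℂ) := by
  have hζ : exp (2 * Real.pi * I / 13) = exp ((2 * Real.pi / 13 : ℝ) * I) := by
    push_cast
    ring_nf
  set ζ := exp (2 * Real.pi * I / 13)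
  have h13 : ζ ^ 13 = 1 := isPrimitiveRoot_exp_two_pi_I_div_thirteen.pow_eq_one
  have pair (k m : ℕ) (hkm : k + m = 13) :
      ζ ^ k + ζ ^ m = 2 * Real.cos (k * (2 * Real.pi / 13)) := by
    rw [← inv_pow_eq_pow_of_pow_eq_one h13 hkm, hζ, exp_mul_I_pow_add_inv]
  have := congr($(pair 1 12 rfl) + $(pair 3 10 rfl) + $(pair 4 9 rfl))
  push_cast at this ⊢
  rw [quadraticPeriodThirteen]
  linear_combination this

theorem quadraticPeriodThirteen_exp_two_pi_I_div_thirteen_eq :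
    quadraticPeriodThirteen (exp (2 * Real.pi * I / 13)) = (Real.sqrt 13 - 1) / 2 := by
  have hζ := isPrimitiveRoot_exp_two_pi_I_div_thirteen
  have hS := quadraticPeriodThirteen_exp_two_pi_I_div_thirteen
  set r := 2 * (Real.cos (1 * (2 * Real.pi / 13)) + Real.cos (3 * (2 * Real.pi / 13))
    + Real.cos (4 * (2 * Real.pi / 13)))
  have hquad : r ^ 2 + r = 3 := by
    exact_mod_cast hS ▸ quadraticPeriodThirteen_sq_add_self hζ
  have hr : -2 < r := by
    have hπ := Real.pi_pos
    have h1 : 0 < Real.cos (1 * (2 * Real.pi / 13)) :=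
      Real.cos_pos_of_mem_Ioo ⟨by linarith, by linarith⟩
    have h3 : 0 < Real.cos (3 * (2 * Real.pi / 13)) :=
      Real.cos_pos_of_mem_Ioo ⟨by linarith, by linarith⟩
    have h4 := Real.neg_one_le_cos (4 * (2 * Real.pi / 13))
    linarith
  rw [hS, eq_of_sq_add_self_eq_three hquad hr]
  push_cast
  ring

end Analytic

open Real in
theorem chi_at_thirteenth_roots :
    χ₁ (Complex.exp (2 * π * Complex.I / 13)) (Complex.exp (2 * π * Complex.I / 13) ^ 4)
        = (1 + Real.sqrt 13) / 2 ∧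
    χ₂ (Complex.exp (2 * π * Complex.I / 13)) (Complex.exp (2 * π * Complex.I / 13) ^ 4) = 1 ∧
    χ₁ (Complex.exp (2 * π * Complex.I / 13) ^ 2) (Complex.exp (2 * π * Complex.I / 13) ^ 7)
        = (1 - Real.sqrt 13) / 2 ∧
    χ₂ (Complex.exp (2 * π * Complex.I / 13) ^ 2) (Complex.exp (2 * π * Complex.I / 13) ^ 7) = 1 := by
  have hζ := isPrimitiveRoot_exp_two_pi_I_div_thirteen
  have hS := quadraticPeriodThirteen_exp_two_pi_I_div_thirteen_eq
  refine ⟨?_, χ₂_pow_four hζ, ?_, χ₂_pow_two_pow_seven hζ⟩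
  · rw [χ₁_pow_four hζ.pow_eq_one, hS]
    ring
  · rw [χ₁_pow_two_pow_seven hζ, hS]
    ring
end

section
/- With p = 2cos(4π/9) and q = 2cos(8π/9) and ζ = e^{2πi/9}: χ₁(ζ, ζ⁴) = −p, χ₂(ζ, ζ⁴) = p + q + 1; χ₁(ζ, ζ³) = −q, χ₂(ζ, ζ³) = 1 − p; χ₁(ζ², ζ⁵) = p + q, χ₂(ζ², ζ⁵) = 1 − q, where χ₁, χ₂ are the fundamental G₂ characters on the torus. -/
theorem IsPrimitiveRoot.one_add_add_sq_eq_zero {R : Type*} [CommRing R] [IsDomain R] {ζ : R}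
    (hζ : IsPrimitiveRoot ζ 3) : 1 + ζ + ζ ^ 2 = 0 := by
  simpa [Finset.sum_range_succ] using hζ.geom_sum_eq_zero (by norm_num)

open Real Complex in
theorem two_mul_cos_eq_exp_pow_add_inv (n k : ℕ) :
    2 * (Real.cos (2 * π * k / n) : ℂ) = exp (2 * π * I / n) ^ k + (exp (2 * π * I / n) ^ k)⁻¹ := by
  rw [← Complex.exp_nat_mul, ← Complex.exp_neg, ofReal_cos, two_cos]
  push_cast
  ring_nf

namespace IsPrimitiveRoot

variable {ζ : ℂ} (hζ : IsPrimitiveRoot ζ 9)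
include hζ

theorem inv_eq_pow_eight : ζ⁻¹ = ζ ^ 8 :=
  inv_eq_of_mul_eq_one_right (by rw [← pow_succ', hζ.pow_eq_one])

theorem one_add_pow_three_add_pow_six : 1 + ζ ^ 3 + ζ ^ 6 = 0 := by
  simpa [← pow_mul] using (hζ.pow (by norm_num) (by norm_num : 9 = 3 * 3)).one_add_add_sq_eq_zero

theorem χ₁_self_pow_four : χ₁ ζ (ζ ^ 4) = -(ζ ^ 2 + (ζ ^ 2)⁻¹) := by
  simp only [χ₁, ← inv_pow, hζ.inv_eq_pow_eight]
  grind [hζ.pow_eq_one, hζ.one_add_pow_three_add_pow_six]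

theorem χ₂_self_pow_four :
    χ₂ ζ (ζ ^ 4) = ζ ^ 2 + (ζ ^ 2)⁻¹ + (ζ ^ 4 + (ζ ^ 4)⁻¹) + 1 := by
  simp only [χ₂, χ₁, ← inv_pow, hζ.inv_eq_pow_eight]
  grind [hζ.pow_eq_one, hζ.one_add_pow_three_add_pow_six]

theorem χ₁_self_pow_three : χ₁ ζ (ζ ^ 3) = -(ζ ^ 4 + (ζ ^ 4)⁻¹) := by
  simp only [χ₁, ← inv_pow, hζ.inv_eq_pow_eight]
  grind [hζ.pow_eq_one, hζ.one_add_pow_three_add_pow_six]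

theorem χ₂_self_pow_three : χ₂ ζ (ζ ^ 3) = 1 - (ζ ^ 2 + (ζ ^ 2)⁻¹) := by
  simp only [χ₂, χ₁, ← inv_pow, hζ.inv_eq_pow_eight]
  grind [hζ.pow_eq_one, hζ.one_add_pow_three_add_pow_six]

theorem χ₁_sq_pow_five : χ₁ (ζ ^ 2) (ζ ^ 5) = ζ ^ 2 + (ζ ^ 2)⁻¹ + (ζ ^ 4 + (ζ ^ 4)⁻¹) := by
  simp only [χ₁, ← inv_pow, hζ.inv_eq_pow_eight]
  grind [hζ.pow_eq_one, hζ.one_add_pow_three_add_pow_six]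

theorem χ₂_sq_pow_five : χ₂ (ζ ^ 2) (ζ ^ 5) = 1 - (ζ ^ 4 + (ζ ^ 4)⁻¹) := by
  simp only [χ₂, χ₁, ← inv_pow, hζ.inv_eq_pow_eight]
  grind [hζ.pow_eq_one, hζ.one_add_pow_three_add_pow_six]

end IsPrimitiveRoot

open Real in
theorem chi_at_ninth_roots :
    χ₁ (Complex.exp (2 * π * Complex.I / 9)) (Complex.exp (2 * π * Complex.I / 9) ^ 4)
        = -(2 * Real.cos (4 * π / 9)) ∧
    χ₂ (Complex.exp (2 * π * Complex.I / 9)) (Complex.exp (2 * π * Complex.I / 9) ^ 4)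
        = 2 * Real.cos (4 * π / 9) + 2 * Real.cos (8 * π / 9) + 1 ∧
    χ₁ (Complex.exp (2 * π * Complex.I / 9)) (Complex.exp (2 * π * Complex.I / 9) ^ 3)
        = -(2 * Real.cos (8 * π / 9)) ∧
    χ₂ (Complex.exp (2 * π * Complex.I / 9)) (Complex.exp (2 * π * Complex.I / 9) ^ 3)
        = 1 - 2 * Real.cos (4 * π / 9) ∧
    χ₁ (Complex.exp (2 * π * Complex.I / 9) ^ 2) (Complex.exp (2 * π * Complex.I / 9) ^ 5)
        = 2 * Real.cos (4 * π / 9) + 2 * Real.cos (8 * π / 9) ∧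
    χ₂ (Complex.exp (2 * π * Complex.I / 9) ^ 2) (Complex.exp (2 * π * Complex.I / 9) ^ 5)
        = 1 - 2 * Real.cos (8 * π / 9) := by
  have hζ : IsPrimitiveRoot (Complex.exp (2 * π * Complex.I / 9)) 9 := by
    simpa using Complex.isPrimitiveRoot_exp 9 (by norm_num)
  have hp : 2 * (Real.cos (4 * π / 9) : ℂ) = Complex.exp (2 * π * Complex.I / 9) ^ 2
      + (Complex.exp (2 * π * Complex.I / 9) ^ 2)⁻¹ := by
    convert two_mul_cos_eq_exp_pow_add_inv 9 2 using 4 <;> push_cast <;> ring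
  have hq : 2 * (Real.cos (8 * π / 9) : ℂ) = Complex.exp (2 * π * Complex.I / 9) ^ 4
      + (Complex.exp (2 * π * Complex.I / 9) ^ 4)⁻¹ := by
    convert two_mul_cos_eq_exp_pow_add_inv 9 4 using 4 <;> push_cast <;> ring
  rw [hp, hq]
  exact ⟨hζ.χ₁_self_pow_four, hζ.χ₂_self_pow_four, hζ.χ₁_self_pow_three, hζ.χ₂_self_pow_three,
    hζ.χ₁_sq_pow_five, hζ.χ₂_sq_pow_five⟩
end

section
/- Let J(θ₁,θ₂) = 8π²(cos(2π(2θ₁+θ₂)) + cos(2π(θ₁−3θ₂)) + cos(2π(3θ₁−2θ₂)) − cos(2π(θ₁+2θ₂)) − cos(2π(3θ₁−θ₂)) − cos(2π(2θ₁−3θ₂))). Then J(1/9, 4/9)² = 64π⁴ · (9/4)(3 + 2cos(π/9) + 2cos(2π/9)), J(1/9, 1/3)² = 64π⁴ · (9/4)(3 − 2cos(2π/9) + 2sin(π/18)), and J(2/9, 5/9)² = 64π⁴ · (9/4)(3 − 2cos(π/9) − 2sin(π/18)). -/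
open Real in
/-- The Jacobian of the change of variables (θ₁,θ₂) ↦ (x,y). -/
noncomputable def Jac (θ₁ θ₂ : ℝ) : ℝ :=
  8 * π ^ 2 * (cos (2 * π * (2 * θ₁ + θ₂)) + cos (2 * π * (θ₁ - 3 * θ₂))
    + cos (2 * π * (3 * θ₁ - 2 * θ₂)) - cos (2 * π * (θ₁ + 2 * θ₂))
    - cos (2 * π * (3 * θ₁ - θ₂)) - cos (2 * π * (2 * θ₁ - 3 * θ₂)))

/-!
At a point (a/9, b/9) every argument of `J` is `2πm/9` with `m` an integer, and `cos (2πm/9)`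
depends only on `±m mod 9`. The five remaining values are polynomials in `c = cos (π/9)`, which
is a root of `8c³ - 6c - 1` by the triple-angle formula and `cos (π/3) = 1/2`. Reducing modulo
this cubic (the `linear_combination` coefficients are the quotients) gives `J / 8π²` as a
polynomial of degree at most 2 in `c`; squaring and reducing once more yields the three values.
-/

open Real

noncomputable def cosNinth (m : ℤ) : ℝ := cos (2 * π * m / 9)

theorem cosNinth_neg (m : ℤ) : cosNinth (-m) = cosNinth m := by
  rw [cosNinth, cosNinth, Int.cast_neg, mul_neg, neg_div, cos_neg]

theorem cosNinth_congr {m r : ℤ} (h : m ≡ r [ZMOD 9]) : cosNinth m = cosNinth r := by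
  obtain ⟨k, hk⟩ := h.symm.dvd
  have hm : (m : ℝ) = r + 9 * k := by exact_mod_cast (by omega : m = r + 9 * k)
  rw [cosNinth, cosNinth, hm, show 2 * π * (r + 9 * k) / 9 = 2 * π * r / 9 + k * (2 * π) by ring,
    cos_add_int_mul_two_pi]

theorem cosNinth_congr_neg {m r : ℤ} (h : m ≡ -r [ZMOD 9]) : cosNinth m = cosNinth r :=
  (cosNinth_congr h).trans (cosNinth_neg r)

theorem cos_pi_div_nine_cubic : 8 * cos (π / 9) ^ 3 - 6 * cos (π / 9) - 1 = 0 := by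
  have h := cos_three_mul (π / 9)
  rw [show 3 * (π / 9) = π / 3 by ring, cos_pi_div_three] at h
  linarith

theorem cos_two_pi_div_nine : cos (2 * π / 9) = 2 * cos (π / 9) ^ 2 - 1 := by
  rw [← cos_two_mul]; ring_nf

theorem cosNinth_zero : cosNinth 0 = 1 := by
  simp [cosNinth]

theorem cosNinth_one : cosNinth 1 = 2 * cos (π / 9) ^ 2 - 1 := by
  rw [cosNinth, Int.cast_one, mul_one, cos_two_pi_div_nine]

theorem cosNinth_two : cosNinth 2 = 2 * (2 * cos (π / 9) ^ 2 - 1) ^ 2 - 1 := by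
  rw [cosNinth, ← cos_two_pi_div_nine, ← cos_two_mul]; push_cast; ring_nf

theorem cosNinth_three : cosNinth 3 = -1 / 2 := by
  rw [cosNinth, show 2 * π * ((3 : ℤ) : ℝ) / 9 = π - π / 3 by push_cast; ring, cos_pi_sub,
    cos_pi_div_three]
  norm_num

theorem cosNinth_four : cosNinth 4 = -cos (π / 9) := by
  rw [cosNinth, show 2 * π * ((4 : ℤ) : ℝ) / 9 = π - π / 9 by push_cast; ring, cos_pi_sub]

theorem sin_pi_div_eighteen : sin (π / 18) = cosNinth 2 := by
  rw [cosNinth, ← cos_pi_div_two_sub]; push_cast; ring_nf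

theorem Jac_div_nine (a b : ℤ) :
    Jac (a / 9) (b / 9) = 8 * π ^ 2 * (cosNinth (2 * a + b) + cosNinth (a - 3 * b)
      + cosNinth (3 * a - 2 * b) - cosNinth (a + 2 * b) - cosNinth (3 * a - b)
      - cosNinth (2 * a - 3 * b)) := by
  simp only [Jac, cosNinth]
  push_cast
  ring_nf

theorem Jac_one_ninth_four_ninths :
    Jac (1 / 9) (4 / 9) = 8 * π ^ 2 * (3 / 2 - 6 * cos (π / 9) ^ 2) := by
  have h := Jac_div_nine 1 4
  norm_num at h
  rw [h, cosNinth_congr_neg (m := 6) (r := 3) (by decide),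
    cosNinth_congr_neg (m := -11) (r := 2) (by decide),
    cosNinth_congr (m := -5) (r := 4) (by decide),
    cosNinth_congr (m := 9) (r := 0) (by decide),
    cosNinth_congr_neg (m := -1) (r := 1) (by decide),
    cosNinth_congr_neg (m := -10) (r := 1) (by decide),
    cosNinth_zero, cosNinth_one, cosNinth_two, cosNinth_three, cosNinth_four]
  linear_combination 8 * π ^ 2 * cos (π / 9) * cos_pi_div_nine_cubic

theorem Jac_one_ninth_one_third :
    Jac (1 / 9) (1 / 3) = 8 * π ^ 2 * (6 * cos (π / 9) ^ 2 - 3 * cos (π / 9) - 9 / 2) := by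
  have h := Jac_div_nine 1 3
  norm_num at h
  rw [h, cosNinth_congr_neg (m := 5) (r := 4) (by decide),
    cosNinth_congr (m := -8) (r := 1) (by decide),
    cosNinth_congr_neg (m := -3) (r := 3) (by decide),
    cosNinth_congr_neg (m := 7) (r := 2) (by decide),
    cosNinth_congr (m := -7) (r := 2) (by decide),
    cosNinth_zero, cosNinth_one, cosNinth_two, cosNinth_three, cosNinth_four]
  linear_combination -16 * π ^ 2 * cos (π / 9) * cos_pi_div_nine_cubic

theorem Jac_two_ninths_five_ninths :
    Jac (2 / 9) (5 / 9) = 8 * π ^ 2 * (3 / 2 - 3 * cos (π / 9)) := by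
  have h := Jac_div_nine 2 5
  norm_num at h
  rw [h, cosNinth_congr (m := 9) (r := 0) (by decide),
    cosNinth_congr_neg (m := -13) (r := 4) (by decide),
    cosNinth_congr_neg (m := -4) (r := 4) (by decide),
    cosNinth_congr (m := 12) (r := 3) (by decide),
    cosNinth_congr_neg (m := -11) (r := 2) (by decide),
    cosNinth_zero, cosNinth_one, cosNinth_two, cosNinth_three, cosNinth_four]
  linear_combination -8 * π ^ 2 * cos (π / 9) * cos_pi_div_nine_cubic

open Real in
theorem Jac_sq_ninth_values :
    Jac (1/9) (4/9) ^ 2 = 64 * π ^ 4 * ((9/4) * (3 + 2 * Real.cos (π/9) + 2 * Real.cos (2*π/9))) ∧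
    Jac (1/9) (1/3) ^ 2 = 64 * π ^ 4 * ((9/4) * (3 - 2 * Real.cos (2*π/9) + 2 * Real.sin (π/18))) ∧
    Jac (2/9) (5/9) ^ 2 = 64 * π ^ 4 * ((9/4) * (3 - 2 * Real.cos (π/9) - 2 * Real.sin (π/18))) := by
  refine ⟨?_, ?_, ?_⟩
  · rw [Jac_one_ninth_four_ninths, cos_two_pi_div_nine]
    linear_combination 288 * π ^ 4 * cos (π / 9) * cos_pi_div_nine_cubic
  · rw [Jac_one_ninth_one_third, cos_two_pi_div_nine, sin_pi_div_eighteen, cosNinth_two]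
    linear_combination -288 * π ^ 4 * cos_pi_div_nine_cubic
  · rw [Jac_two_ninths_five_ninths, sin_pi_div_eighteen, cosNinth_two]
    linear_combination 288 * π ^ 4 * cos (π / 9) * cos_pi_div_nine_cubic
end

section
/- For every pair (t₁,t₂) ∈ 𝕋² and every element g of the dihedral group D₁₂ generated by T₂ = [[0,-1],[-1,0]] and T₆ = [[0,1],[-1,1]] acting on 𝕋² via exponents, the multiset {1, s₁, s₁⁻¹, s₂, s₂⁻¹, s₁s₂⁻¹, s₁⁻¹s₂} equals the multiset {1, t₁, t₁⁻¹, t₂, t₂⁻¹, t₁t₂⁻¹, t₁⁻¹t₂}, where (s₁,s₂) = g(t₁,t₂). -/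
def T2mat : Matrix (Fin 2) (Fin 2) ℤ := !![0, -1; -1, 0]
def T6mat : Matrix (Fin 2) (Fin 2) ℤ := !![0, 1; -1, 1]

/-- T₂ as an element of GL(2,ℤ) (the units of the 2×2 integer matrices). -/
def T2 : (Matrix (Fin 2) (Fin 2) ℤ)ˣ := ⟨T2mat, T2mat, by decide, by decide⟩

/-- T₆ as an element of GL(2,ℤ). -/
def T6 : (Matrix (Fin 2) (Fin 2) ℤ)ˣ := ⟨T6mat, !![1, -1; 1, 0], by decide, by decide⟩

/-- Action of an integer matrix on 𝕋² ⊂ ℂ² via exponents. -/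
noncomputable def act (T : Matrix (Fin 2) (Fin 2) ℤ) (ω : ℂ × ℂ) : ℂ × ℂ :=
  (ω.1 ^ T 0 0 * ω.2 ^ T 0 1, ω.1 ^ T 1 0 * ω.2 ^ T 1 1)

/-- The multiset of eigenvalues of a torus element of G₂ in the 7-dim. representation. -/
noncomputable def eigMultiset (t₁ t₂ : ℂ) : Multiset ℂ :=
  {1, t₁, t₁⁻¹, t₂, t₂⁻¹, t₁ * t₂⁻¹, t₁⁻¹ * t₂}

/-! Apart from `1`, the eigenvalues come in three pairs `{x, x⁻¹}`, for `x = t₁, t₂, t₁ t₂⁻¹`.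
On `(ℂˣ)²` the generators `T₂` and `T₆` permute these pairs, inverting some of them, so they
preserve the multiset; and the matrices preserving it form a subgroup of `GL(2, ℤ)`. -/

section Action

variable {ω : ℂ × ℂ}

lemma act_one_left (ω : ℂ × ℂ) : act 1 ω = ω := by
  simp [act]

lemma act_mul_left (A B : Matrix (Fin 2) (Fin 2) ℤ) (h₁ : ω.1 ≠ 0) (h₂ : ω.2 ≠ 0) :
    act (A * B) ω = act A (act B ω) := by
  simp only [act, Matrix.mul_apply, Fin.sum_univ_two, mul_zpow, ← zpow_mul,
    zpow_add₀ h₁, zpow_add₀ h₂]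
  ext <;> ring_nf

lemma act_fst_ne_zero (A : Matrix (Fin 2) (Fin 2) ℤ) (h₁ : ω.1 ≠ 0) (h₂ : ω.2 ≠ 0) :
    (act A ω).1 ≠ 0 :=
  mul_ne_zero (zpow_ne_zero _ h₁) (zpow_ne_zero _ h₂)

lemma act_snd_ne_zero (A : Matrix (Fin 2) (Fin 2) ℤ) (h₁ : ω.1 ≠ 0) (h₂ : ω.2 ≠ 0) :
    (act A ω).2 ≠ 0 :=
  mul_ne_zero (zpow_ne_zero _ h₁) (zpow_ne_zero _ h₂)

end Action

def actStabilizer {α : Type*} (f : ℂ × ℂ → α) : Subgroup (Matrix (Fin 2) (Fin 2) ℤ)ˣ where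
  carrier := {g | ∀ ω : ℂ × ℂ, ω.1 ≠ 0 → ω.2 ≠ 0 → f (act g ω) = f ω}
  one_mem' ω _ _ := by rw [Units.val_one, act_one_left]
  mul_mem' {g h} hg hh ω h₁ h₂ := by
    rw [Units.val_mul, act_mul_left _ _ h₁ h₂,
      hg _ (act_fst_ne_zero _ h₁ h₂) (act_snd_ne_zero _ h₁ h₂), hh ω h₁ h₂]
  inv_mem' {g} hg ω h₁ h₂ := by
    have hinv := hg _ (act_fst_ne_zero (↑g⁻¹) h₁ h₂) (act_snd_ne_zero (↑g⁻¹) h₁ h₂)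
    rwa [← act_mul_left _ _ h₁ h₂, ← Units.val_mul, mul_inv_cancel, Units.val_one,
      act_one_left, eq_comm] at hinv

def invPair {K : Type*} [Inv K] (x : K) : Multiset K := {x, x⁻¹}

lemma invPair_inv {K : Type*} [InvolutiveInv K] (x : K) : invPair x⁻¹ = invPair x := by
  rw [invPair, invPair, inv_inv, Multiset.pair_comm]

lemma eigMultiset_eq_cons_invPair (t₁ t₂ : ℂ) :
    eigMultiset t₁ t₂ = 1 ::ₘ (invPair t₁ + invPair t₂ + invPair (t₁ * t₂⁻¹)) := by
  rw [invPair, invPair, invPair, mul_inv, inv_inv]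
  simp only [eigMultiset, Multiset.insert_eq_cons, Multiset.cons_add, Multiset.singleton_add]

lemma eigMultiset_inv_swap (t₁ t₂ : ℂ) : eigMultiset t₂⁻¹ t₁⁻¹ = eigMultiset t₁ t₂ := by
  simp only [eigMultiset_eq_cons_invPair, invPair_inv, inv_inv, mul_comm t₂⁻¹ t₁,
    add_comm (invPair t₂)]

lemma eigMultiset_T6 {t₁ t₂ : ℂ} (h₂ : t₂ ≠ 0) :
    eigMultiset t₂ (t₁⁻¹ * t₂) = eigMultiset t₁ t₂ := by
  have hquot : t₁⁻¹ * t₂ = (t₁ * t₂⁻¹)⁻¹ := by rw [mul_inv, inv_inv]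
  have hprod : t₂ * (t₁⁻¹ * t₂)⁻¹ = t₁ := by rw [hquot, inv_inv]; field_simp
  rw [eigMultiset_eq_cons_invPair, eigMultiset_eq_cons_invPair, hprod, hquot, invPair_inv]
  congr 1
  abel

lemma T2_mem_actStabilizer : T2 ∈ actStabilizer (fun ω => eigMultiset ω.1 ω.2) := by
  intro ω _ _
  simpa [act, T2, T2mat] using eigMultiset_inv_swap ω.1 ω.2

lemma T6_mem_actStabilizer : T6 ∈ actStabilizer (fun ω => eigMultiset ω.1 ω.2) := by
  intro ω _ h₂
  simpa [act, T6, T6mat] using eigMultiset_T6 h₂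

theorem eigMultiset_D12_invariant :
    ∀ t₁ t₂ : ℂ, ‖t₁‖ = 1 → ‖t₂‖ = 1 →
      ∀ g ∈ Subgroup.closure ({T2, T6} : Set (Matrix (Fin 2) (Fin 2) ℤ)ˣ),
        eigMultiset (act (g : Matrix (Fin 2) (Fin 2) ℤ) (t₁, t₂)).1
            (act (g : Matrix (Fin 2) (Fin 2) ℤ) (t₁, t₂)).2
          = eigMultiset t₁ t₂ := by
  intro t₁ t₂ h₁ h₂ g hg
  have hne : ∀ t : ℂ, ‖t‖ = 1 → t ≠ 0 := fun t ht => norm_ne_zero_iff.mp (ht ▸ one_ne_zero)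
  have hclosure : Subgroup.closure {T2, T6} ≤ actStabilizer (fun ω => eigMultiset ω.1 ω.2) :=
    (Subgroup.closure_le _).mpr
      (Set.insert_subset T2_mem_actStabilizer (Set.singleton_subset_iff.mpr T6_mem_actStabilizer))
  exact hclosure hg (t₁, t₂) (hne t₁ h₁) (hne t₂ h₂)
end
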